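/- The infimum of the energy over smooth functions compactly supported in Ω equals m: inf{ ∫_{ℝ^N} (|∇u|² + u²) dx : u ∈ C_c^∞(ℝ^N), support of u contained in Ω, |u|_p = 1 } = m. -/

import Mathlib

open MeasureTheory Filter Topology

noncomputable section

namespace Paper

/-- `ℝ^N` as a Euclidean space. -/
abbrev Euc (N : ℕ) := EuclideanSpace ℝ (Fin N)

/-- The last coordinate `x_N` of a point `x ∈ ℝ^N`. -/
def lastCoord (N : ℕ) (x : Euc N) : ℝ :=
  if h : 0 < N then x ⟨N - 1, Nat.sub_lt h one_pos⟩ else 0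

/-- The norm `|x'|` of the first `N-1` coordinates of `x ∈ ℝ^N`. -/
def primeNorm (N : ℕ) (x : Euc N) : ℝ :=
  Real.sqrt (∑ j : Fin N, if (j : ℕ) < N - 1 then (x j) ^ 2 else 0)

/-- The point `(0, …, 0, t)` on the `x_N`-axis. -/
def axisPt (N : ℕ) (t : ℝ) : Euc N :=
  WithLp.toLp 2 (fun j : Fin N => if (j : ℕ) = N - 1 then t else 0)

/-- A `C_c^∞` test function on `ℝ^N`. -/
def IsTestFun {N : ℕ} (φ : Euc N → ℝ) : Prop :=
  ContDiff ℝ (⊤ : ℕ∞) φ ∧ HasCompactSupport φ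

/-- The `L^p` norm `|u|_p = (∫ |u|^p)^{1/p}`. -/
def pnorm {N : ℕ} (p : ℝ) (u : Euc N → ℝ) : ℝ :=
  (∫ x, |u x| ^ p) ^ (1 / p)

/-- `‖u‖² = ∫ (|g|² + u²)`, for `u` with weak gradient `g`. -/
def energy {N : ℕ} (u : Euc N → ℝ) (g : Euc N → Euc N) : ℝ :=
  ∫ x, (‖g x‖ ^ 2 + (u x) ^ 2)

/-- `(u, g)` is an `H¹` function with weak gradient `g`. -/
def IsH1 {N : ℕ} (u : Euc N → ℝ) (g : Euc N → Euc N) : Prop :=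
  LocallyIntegrable u volume ∧ LocallyIntegrable g volume ∧
  Integrable (fun x => ‖g x‖ ^ 2 + (u x) ^ 2) volume ∧
  ∀ φ : Euc N → ℝ, IsTestFun φ → ∀ i : Fin N,
    ∫ x, u x * fderiv ℝ φ x (EuclideanSpace.single i 1) = - ∫ x, (g x i) * φ x

/-- `u ∈ H¹₀(D)`, with weak gradient `g`. -/
def MemH10 {N : ℕ} (D : Set (Euc N)) (u : Euc N → ℝ) (g : Euc N → Euc N) : Prop :=
  IsH1 u g ∧ ∃ uk : ℕ → Euc N → ℝ,
    (∀ k, IsTestFun (uk k) ∧ tsupport (uk k) ⊆ D) ∧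
    Tendsto (fun k => ∫ x, (‖gradient (uk k) x - g x‖ ^ 2 + (uk k x - u x) ^ 2))
      atTop (𝓝 0)

/-- `m = inf { ∫ (|∇u|² + u²) : u ∈ C_c^∞(ℝ^N), |u|_p = 1 }`. -/
def mconst (N : ℕ) (p : ℝ) : ℝ :=
  sInf { c | ∃ u : Euc N → ℝ, IsTestFun u ∧ pnorm p u = 1 ∧
    c = ∫ x, (‖gradient u x‖ ^ 2 + (u x) ^ 2) }

/-- The strip `{ x : |x_N - t| < q/2 }`; `S_q = strip N q 0`. -/
def strip (N : ℕ) (q t : ℝ) : Set (Euc N) :=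
  { x | |lastCoord N x - t| < q / 2 }

/-- `i ↦ q_i` is a bijection from the positive integers onto the positive rationals. -/
def QBij (q : ℕ → ℚ) : Prop :=
  (∀ i, 1 ≤ i → 0 < q i) ∧ ∀ r : ℚ, 0 < r → ∃! i, 1 ≤ i ∧ q i = r

/-- The domain `Ω`. -/
def omegaSet (N : ℕ) (q : ℕ → ℚ) : Set (Euc N) :=
  { x | primeNorm N x < 1 } ∪ strip N (q 1) 0 ∪
    ⋃ i ∈ { i : ℕ | 2 ≤ i },
      strip N (q i) ((i : ℝ) + (∑ j ∈ Finset.Icc 1 (i - 1), (q j : ℝ)) + (q i : ℝ) / 2)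

/-- The height of the point `Q_i^-`. -/
def qMinusHt (q : ℕ → ℚ) (i : ℕ) : ℝ :=
  if i = 1 then -(q 1 : ℝ) / 2 else (i : ℝ) + ∑ j ∈ Finset.Icc 1 (i - 1), (q j : ℝ)

/-- The height of the point `Q_i^+`. -/
def qPlusHt (q : ℕ → ℚ) (i : ℕ) : ℝ :=
  if i = 1 then (q 1 : ℝ) / 2 else (i : ℝ) + ∑ j ∈ Finset.Icc 1 i, (q j : ℝ)

/-- `u` is a weak solution of `-Δu + u = μ|u|^{p-2}u` in `D`, `u ∈ H¹₀(D)`. -/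
def IsWeakSolution {N : ℕ} (p : ℝ) (D : Set (Euc N)) (μ : ℝ)
    (u : Euc N → ℝ) (g : Euc N → Euc N) : Prop :=
  MemH10 D u g ∧ ∀ w : Euc N → ℝ, IsTestFun w → tsupport w ⊆ D →
    ∫ x, ((inner ℝ (g x) (gradient w x) : ℝ) + u x * w x) =
      μ * ∫ x, |u x| ^ (p - 2) * u x * w x

/-- `u` is axially symmetric: up to a.e. equality it depends only on `(|x'|, x_N)`. -/
def AxiallySymmetric {N : ℕ} (u : Euc N → ℝ) : Prop :=
  ∃ v : ℝ → ℝ → ℝ, u =ᵐ[volume] fun x => v (primeNorm N x) (lastCoord N x)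

/-- The local average `ũ(x) = (1/λ(B(x,1))) ∫_{B(x,1)} |u|`. -/
def locAvg {N : ℕ} (u : Euc N → ℝ) (x : Euc N) : ℝ :=
  (volume (Metric.ball x 1)).toReal⁻¹ * ∫ y in Metric.ball x 1, |u y|

/-- `û(x) = max(ũ(x) - (1/2) sup ũ, 0)`. -/
def hatFn {N : ℕ} (u : Euc N → ℝ) (x : Euc N) : ℝ :=
  max (locAvg u x - (⨆ z, locAvg u z) / 2) 0

/-- The barycenter `β(u) = (∫ û(x)^p x dx) / (∫ û(x)^p dx)`. -/
def bary {N : ℕ} (p : ℝ) (u : Euc N → ℝ) : Euc N :=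
  (∫ x, (hatFn u x) ^ p)⁻¹ • ∫ x, (hatFn u x) ^ p • x

/-- `Θ(q)`: the infimum of the energy over test functions supported in `S_q`. -/
def theta (N : ℕ) (p q : ℝ) : ℝ :=
  sInf { c | ∃ u : Euc N → ℝ, IsTestFun u ∧ tsupport u ⊆ strip N q 0 ∧
    pnorm p u = 1 ∧ c = ∫ x, (‖gradient u x‖ ^ 2 + (u x) ^ 2) }

/-- The unit cube `Q_l` with integer vertex `l ∈ ℤ^N`. -/
def cube (N : ℕ) (l : Fin N → ℤ) : Set (Euc N) :=
  { x | ∀ j, (l j : ℝ) ≤ x j ∧ x j < (l j : ℝ) + 1 }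

end Paper

open Paper

lemma coord_abs_le_norm {N : ℕ} (y : Euc N) (j : Fin N) : |y j| ≤ ‖y‖ := by
  rw [EuclideanSpace.norm_eq]
  calc |y j| = Real.sqrt (‖y j‖^2) := by
        rw [Real.norm_eq_abs, Real.sqrt_sq_eq_abs, abs_abs]
  _ ≤ _ := Real.sqrt_le_sqrt (Finset.single_le_sum (f := fun i => ‖y i‖^2)
      (fun i _ => sq_nonneg _) (Finset.mem_univ j))

lemma fderiv_translate {N : ℕ} (u : Euc N → ℝ) (hu : ContDiff ℝ (⊤ : ℕ∞) u) (a x : Euc N) :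
    fderiv ℝ (fun y => u (y - a)) x = fderiv ℝ u (x - a) := by
  have h1 := ((hu.differentiable (by simp) (x - a)).hasFDerivAt).comp x (hasFDerivAt_sub_const a)
  rw [ContinuousLinearMap.comp_id] at h1
  exact h1.fderiv

lemma gradient_translate {N : ℕ} (u : Euc N → ℝ) (hu : ContDiff ℝ (⊤ : ℕ∞) u) (a x : Euc N) :
    gradient (fun y => u (y - a)) x = gradient u (x - a) := by
  unfold gradient
  rw [fderiv_translate u hu a x]

lemma tsupport_translate {N : ℕ} (u : Euc N → ℝ) (a : Euc N) :
    tsupport (fun y => u (y - a)) = (· - a) ⁻¹' tsupport u := by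
  have : (fun y => u (y - a)) = u ∘ (Homeomorph.subRight a) := rfl
  rw [this, tsupport, Function.support_comp_eq_preimage,
    ← Homeomorph.preimage_closure (Homeomorph.subRight a)]
  rfl


/-- the infimum of the energy over smooth functions compactly
supported in `Ω` with `|u|_p = 1` equals `m`. -/
theorem statement9 (N : ℕ) (hN : 3 ≤ N) (p : ℝ) (hp : 2 < p) (hp' : p < 2 * N / ((N : ℝ) - 2))
    (q : ℕ → ℚ) (hq : QBij q) :
    sInf { c : ℝ | ∃ u : Euc N → ℝ, IsTestFun u ∧ tsupport u ⊆ omegaSet N q ∧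
        pnorm p u = 1 ∧ c = ∫ x, (‖gradient u x‖ ^ 2 + (u x) ^ 2) }
      = mconst N p := by
  have hset : { c : ℝ | ∃ u : Euc N → ℝ, IsTestFun u ∧ tsupport u ⊆ omegaSet N q ∧
        pnorm p u = 1 ∧ c = ∫ x, (‖gradient u x‖ ^ 2 + (u x) ^ 2) }
      = { c | ∃ u : Euc N → ℝ, IsTestFun u ∧ pnorm p u = 1 ∧
        c = ∫ x, (‖gradient u x‖ ^ 2 + (u x) ^ 2) } := by
    apply Set.Subset.antisymm
    · rintro c ⟨u, hu, -, hn, hc⟩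
      exact ⟨u, hu, hn, hc⟩
    · rintro c ⟨u, hu, hn, hc⟩
      -- bound the support of u
      obtain ⟨R0, hR0⟩ := (hu.2.isBounded).subset_closedBall 0
      set R : ℝ := max R0 0 with hRdef
      have hRsupp : tsupport u ⊆ Metric.closedBall 0 R :=
        hR0.trans (Metric.closedBall_subset_closedBall (le_max_left _ _))
      have hRnn : (0:ℝ) ≤ R := le_max_right _ _
      -- pick a rational r > 2R and the index i with q i = r
      obtain ⟨r, hr⟩ := exists_rat_gt (2 * R)
      have hr0 : (0:ℚ) < r := by
        have : (0:ℝ) < (r:ℝ) := lt_of_le_of_lt (by positivity) hr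
        exact_mod_cast this
      obtain ⟨i, ⟨hi1, hqi⟩, -⟩ := hq.2 r hr0
      -- the center of the strip
      set t : ℝ := if i = 1 then 0 else
        (i : ℝ) + (∑ j ∈ Finset.Icc 1 (i - 1), (q j : ℝ)) + (q i : ℝ) / 2 with ht
      have hstrip : strip N (q i) t ⊆ omegaSet N q := by
        by_cases h1 : i = 1
        · subst h1
          simp only [ht, if_pos rfl]
          exact Set.subset_union_of_subset_left Set.subset_union_right _
        · have h2 : 2 ≤ i := by omega
          refine Set.subset_union_of_subset_right ?_ _
          have := Set.subset_biUnion_of_mem (u := fun i : ℕ =>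
            strip N (q i) ((i : ℝ) + (∑ j ∈ Finset.Icc 1 (i - 1), (q j : ℝ)) + (q i : ℝ) / 2))
            (show i ∈ { i : ℕ | 2 ≤ i } from h2)
          simpa [ht, if_neg h1] using this
      set a : Euc N := axisPt N t with ha
      have hlastA : lastCoord N a = t := by
        have hN0 : 0 < N := by omega
        simp [lastCoord, axisPt, ha, dif_pos hN0]
      refine ⟨fun x => u (x - a), ⟨hu.1.comp (contDiff_id.sub contDiff_const),
        hu.2.comp_homeomorph (Homeomorph.subRight a)⟩, ?_, ?_, ?_⟩
      · -- tsupport ⊆ Ω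
        intro x hx
        apply hstrip
        have hx' : x - a ∈ tsupport u := by
          rw [tsupport_translate u a] at hx; exact hx
        have hnorm : ‖x - a‖ ≤ R := by
          simpa using Metric.mem_closedBall.mp (hRsupp hx')
        have hcoord : |(x - a) ⟨N - 1, Nat.sub_lt (by omega) one_pos⟩| ≤ ‖x - a‖ :=
          coord_abs_le_norm _ _
        have hN0 : 0 < N := by omega
        have hlast : lastCoord N x - t = (x - a) ⟨N - 1, Nat.sub_lt hN0 one_pos⟩ := by
          have hxa : (x - a) ⟨N - 1, Nat.sub_lt hN0 one_pos⟩
              = x ⟨N - 1, Nat.sub_lt hN0 one_pos⟩ - a ⟨N - 1, Nat.sub_lt hN0 one_pos⟩ := rfl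
          rw [hxa]
          have : a ⟨N - 1, Nat.sub_lt hN0 one_pos⟩ = t := by simp [ha, axisPt]
          rw [this]
          simp [lastCoord, dif_pos hN0]
        show |lastCoord N x - t| < (q i : ℝ) / 2
        rw [hlast]
        calc |(x - a) ⟨N - 1, Nat.sub_lt hN0 one_pos⟩| ≤ R := hcoord.trans hnorm
        _ < (q i : ℝ) / 2 := by rw [hqi]; linarith
      · -- pnorm
        rw [← hn]
        unfold pnorm
        congr 1
        exact integral_sub_right_eq_self (fun y => |u y| ^ p) a
      · -- energy
        rw [hc]
        have hgrad : ∀ x, gradient (fun y => u (y - a)) x = gradient u (x - a) :=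
          gradient_translate u hu.1 a
        have : (fun x => ‖gradient (fun y => u (y - a)) x‖ ^ 2 + (u (x - a)) ^ 2)
            = fun x => (fun z => ‖gradient u z‖ ^ 2 + (u z) ^ 2) (x - a) := by
          funext x; rw [hgrad x]
        rw [this, integral_sub_right_eq_self (fun z => ‖gradient u z‖ ^ 2 + (u z) ^ 2) a]
  rw [hset]
  rfl
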